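/- arXiv:1503.04488 — 4 statements merged into one kernel-verified Lean document; each statement's English description precedes it below -/
import Mathlib

section
/- There exists a constant C > 0 such that for all real numbers x, y ≥ 0, one has |x² log(x²) − y² log(y²)| ≤ C (1 + x² + y²) |x − y|, where the expression t log(t) is interpreted as 0 when t = 0. -/
/-! With `f t = t² log t²`, the derivative `f' t = 2t (log t² + 1) = 4 t log t + 2t` is bounded by
`5 (1 + t²)`, because `|t log t| ≤ 1 + t²` (it is at most `1` on `[0, 1]` and at most `t²` beyond).
The mean value theorem on `[y, x]`, where `f` is differentiable away from `0`, concludes. -/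

open Real

lemma abs_mul_log_le_one_add_sq (t : ℝ) : |t * log t| ≤ 1 + t ^ 2 := by
  rw [← log_abs, abs_mul, ← sq_abs t]
  obtain hs | hs := (abs_nonneg t).eq_or_lt
  · simp [← hs]
  generalize |t| = s at hs ⊢
  rcases le_total s 1 with hs1 | hs1
  · have hsmall := abs_log_mul_self_lt s hs hs1
    rw [abs_mul, mul_comm, abs_of_pos hs] at hsmall
    nlinarith [sq_nonneg s]
  · have hlog : log s ≤ s - 1 := log_le_sub_one_of_pos hs
    rw [abs_of_nonneg (log_nonneg hs1)]
    nlinarith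

lemma hasDerivAt_sq_mul_log_sq {t : ℝ} (ht : t ≠ 0) :
    HasDerivAt (fun t => t ^ 2 * log (t ^ 2)) ((log (t ^ 2) + 1) * (2 * t)) t := by
  have hcomp := (hasDerivAt_mul_log (pow_ne_zero 2 ht)).comp (h := fun t : ℝ => t ^ 2) t
    (hasDerivAt_pow 2 t)
  simpa only [Function.comp_def, Nat.cast_ofNat, pow_one, Nat.add_one_sub_one] using hcomp

lemma abs_deriv_sq_mul_log_sq_le (t : ℝ) : |(log (t ^ 2) + 1) * (2 * t)| ≤ 5 * (1 + t ^ 2) := by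
  have hlog : |t * log t| ≤ 1 + t ^ 2 := abs_mul_log_le_one_add_sq t
  have htwo : |2 * t| ≤ 1 + t ^ 2 := by
    rw [abs_le]; constructor <;> nlinarith [sq_nonneg (t + 1), sq_nonneg (t - 1)]
  calc |(log (t ^ 2) + 1) * (2 * t)| = |4 * (t * log t) + 2 * t| := by
        rw [log_pow]; push_cast; ring_nf
    _ ≤ 4 * |t * log t| + |2 * t| := by
        grw [abs_add_le, abs_mul, abs_of_pos (by norm_num : (0:ℝ) < 4)]
    _ ≤ 5 * (1 + t ^ 2) := by linarith

lemma abs_sq_mul_log_sq_sub_le_of_le {x y : ℝ} (hy : 0 ≤ y) (hyx : y ≤ x) :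
    |x ^ 2 * log (x ^ 2) - y ^ 2 * log (y ^ 2)| ≤ 5 * (1 + x ^ 2) * (x - y) := by
  obtain rfl | hyx := hyx.eq_or_lt
  · simp
  have hcont : Continuous fun t : ℝ => t ^ 2 * log (t ^ 2) :=
    continuous_mul_log.comp (continuous_pow 2)
  obtain ⟨c, ⟨hyc, hcx⟩, hc⟩ := exists_hasDerivAt_eq_slope _ _ hyx hcont.continuousOn
    fun c hc => hasDerivAt_sq_mul_log_sq (hy.trans_lt hc.1).ne'
  rw [eq_div_iff (sub_ne_zero.2 hyx.ne'), eq_comm] at hc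
  have hcx2 : c ^ 2 ≤ x ^ 2 := pow_le_pow_left₀ (hy.trans hyc.le) hcx.le 2
  rw [hc, abs_mul, abs_of_pos (sub_pos.2 hyx)]
  gcongr
  exact (abs_deriv_sq_mul_log_sq_le c).trans (by gcongr)

/-- There exists a constant `C > 0` such that for all reals `x, y ≥ 0`,
`|x² log(x²) − y² log(y²)| ≤ C (1 + x² + y²) |x − y|`.
(In Mathlib, `Real.log 0 = 0`, which matches the convention `0 · log 0 = 0`.) -/
theorem abs_sq_log_sq_sub_le :
    ∃ C > 0, ∀ x y : ℝ, 0 ≤ x → 0 ≤ y →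
      |x ^ 2 * Real.log (x ^ 2) - y ^ 2 * Real.log (y ^ 2)| ≤
        C * (1 + x ^ 2 + y ^ 2) * |x - y| := by
  refine ⟨5, by norm_num, fun x y hx hy => ?_⟩
  wlog hyx : y ≤ x generalizing x y
  · simpa only [abs_sub_comm, add_right_comm] using this y x hy hx (le_of_not_ge hyx)
  calc _ ≤ 5 * (1 + x ^ 2) * (x - y) := abs_sq_mul_log_sq_sub_le_of_le hy hyx
    _ ≤ 5 * (1 + x ^ 2 + y ^ 2) * |x - y| := by
      rw [abs_of_nonneg (sub_nonneg.2 hyx)]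
      exact mul_le_mul_of_nonneg_right (by nlinarith) (sub_nonneg.2 hyx)
end

section
/- Let m ≥ 1, let β_1, …, β_m ∈ (0, 1), set σ = β_1 + ⋯ + β_m, let p_1, …, p_m ∈ ℂ, let R > 0, and let q ∈ [1, ∞) satisfy qσ < 1. For t ∈ (0, 1] define f_t(z) = ∏_{j=1}^m |z − t p_j|^{−2β_j} and define f_0(z) = |z|^{−2σ} (for z avoiding the singular points). Then f_t converges to f_0 in L^q of the ball B_R = {z ∈ ℂ : |z| < R} with respect to Lebesgue measure as t → 0⁺, i.e. ∫_{B_R} |f_t − f_0|^q dA → 0. -/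
/-!
Since `|a - b| ^ q ≤ a ^ q + b ^ q` for `a, b ≥ 0` and `∏ x_j ^ β_j ≤ ∑ x_j ^ σ`, the integrand
`|f_t - f_0| ^ q` is dominated by `G_t(z) = ∑_j |z - t p_j| ^ (-2σq) + |z| ^ (-2σq)`. Because
`2σq < 2 = dim_ℝ ℂ`, the function `|z| ^ (-2σq)` is integrable on balls, so translating it changes
its integral over a ball continuously. Hence `G_t → G_0` both pointwise (off `z = 0`) and in
integral, while `|f_t - f_0| ^ q → 0` pointwise, and a generalized dominated convergence theorem
(with the varying dominating functions `G_t`, proved via Scheffé's lemma) concludes.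
-/

open MeasureTheory Filter Metric Set Topology
open scoped ENNReal

theorem Real.abs_sub_rpow_le_rpow_add_rpow {a b q : ℝ} (ha : 0 ≤ a) (hb : 0 ≤ b) (hq : 0 ≤ q) :
    |a - b| ^ q ≤ a ^ q + b ^ q := by
  rcases le_total a b with hab | hab
  · have : |a - b| ≤ b := by rw [abs_sub_comm, abs_of_nonneg (by linarith)]; linarith
    linarith [Real.rpow_le_rpow (abs_nonneg _) this hq, Real.rpow_nonneg ha q]
  · have : |a - b| ≤ a := by rw [abs_of_nonneg (by linarith)]; linarith
    linarith [Real.rpow_le_rpow (abs_nonneg _) this hq, Real.rpow_nonneg hb q]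

theorem Real.prod_rpow_le_sum_rpow_sum {ι : Type*} {s : Finset ι} (hs : s.Nonempty)
    {x β : ι → ℝ} (hx : ∀ i ∈ s, 0 ≤ x i) (hβ : ∀ i ∈ s, 0 ≤ β i) :
    ∏ i ∈ s, x i ^ β i ≤ ∑ i ∈ s, x i ^ ∑ j ∈ s, β j := by
  obtain ⟨k, hk, hmax⟩ := s.exists_max_image x hs
  calc ∏ i ∈ s, x i ^ β i ≤ ∏ i ∈ s, x k ^ β i :=
        Finset.prod_le_prod (fun i hi => Real.rpow_nonneg (hx i hi) _)
          fun i hi => Real.rpow_le_rpow (hx i hi) (hmax i hi) (hβ i hi)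
    _ = x k ^ ∑ j ∈ s, β j := (Real.rpow_sum_of_nonneg (hx k hk) hβ).symm
    _ ≤ ∑ i ∈ s, x i ^ ∑ j ∈ s, β j :=
        Finset.single_le_sum (f := fun i => x i ^ ∑ j ∈ s, β j)
          (fun i hi => Real.rpow_nonneg (hx i hi) _) hk

theorem abs_prod_norm_sub_rpow_sub_rpow_le {E ι : Type*} [NormedAddCommGroup E] [Fintype ι]
    [Nonempty ι] {β : ι → ℝ} (hβ : ∀ j, 0 ≤ β j) {q : ℝ} (hq : 0 ≤ q) (a : ι → E) (z : E) :
    |(∏ j, ‖z - a j‖ ^ (-(2 * β j))) - ‖z‖ ^ (-(2 * ∑ j, β j))| ^ q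
      ≤ ∑ j, ‖z - a j‖ ^ (-(2 * (∑ j, β j) * q)) + ‖z‖ ^ (-(2 * (∑ j, β j) * q)) := by
  have hprod : (∏ j, ‖z - a j‖ ^ (-(2 * β j))) ^ q
      ≤ ∑ j, ‖z - a j‖ ^ (-(2 * (∑ j, β j) * q)) := by
    calc (∏ j, ‖z - a j‖ ^ (-(2 * β j))) ^ q = ∏ j, (‖z - a j‖ ^ (-(2 * q))) ^ β j := by
          rw [← Real.finsetProd_rpow _ _ fun j _ => by positivity]
          refine Finset.prod_congr rfl fun j _ => ?_
          rw [← Real.rpow_mul (norm_nonneg _), ← Real.rpow_mul (norm_nonneg _)]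
          ring_nf
      _ ≤ ∑ j, (‖z - a j‖ ^ (-(2 * q))) ^ ∑ j, β j :=
          Real.prod_rpow_le_sum_rpow_sum Finset.univ_nonempty (fun j _ => by positivity)
            fun j _ => hβ j
      _ = ∑ j, ‖z - a j‖ ^ (-(2 * (∑ j, β j) * q)) := by
          refine Finset.sum_congr rfl fun j _ => ?_
          rw [← Real.rpow_mul (norm_nonneg _)]
          ring_nf
  have hnorm : (‖z‖ ^ (-(2 * ∑ j, β j))) ^ q = ‖z‖ ^ (-(2 * (∑ j, β j) * q)) := by
    rw [← Real.rpow_mul (norm_nonneg _)]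
    ring_nf
  calc _ ≤ (∏ j, ‖z - a j‖ ^ (-(2 * β j))) ^ q + (‖z‖ ^ (-(2 * ∑ j, β j))) ^ q :=
        Real.abs_sub_rpow_le_rpow_add_rpow (by positivity) (by positivity) hq
    _ ≤ _ := by rw [hnorm]; linarith

section GeneralizedDominatedConvergence

variable {α ι : Type*} [MeasurableSpace α] {μ : Measure α} {l : Filter ι}
  [l.IsCountablyGenerated] {F G : ι → α → ℝ≥0∞} {g : α → ℝ≥0∞}

theorem tendsto_lintegral_tsub_of_tendsto_lintegral (hG : ∀ i, AEMeasurable (G i) μ)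
    (hg : AEMeasurable g μ) (hGg : ∀ᵐ x ∂μ, Tendsto (fun i => G i x) l (𝓝 (g x)))
    (hint : Tendsto (fun i => ∫⁻ x, G i x ∂μ) l (𝓝 (∫⁻ x, g x ∂μ)))
    (hfin : ∫⁻ x, g x ∂μ ≠ ∞) :
    Tendsto (fun i => ∫⁻ x, (G i x - g x) ∂μ) l (𝓝 0) := by
  have hdefect : Tendsto (fun i => ∫⁻ x, (g x - G i x) ∂μ) l (𝓝 0) := by
    have := tendsto_lintegral_filter_of_dominated_convergence' g
      (Eventually.of_forall fun i => hg.sub (hG i))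
      (Eventually.of_forall fun i => ae_of_all _ fun x => tsub_le_self) hfin
      (by
        filter_upwards [hGg, ae_lt_top' hg hfin] with x hx hgx
        simpa using ENNReal.Tendsto.sub tendsto_const_nhds hx (Or.inl hgx.ne))
    simpa using this
  have hsplit : ∀ i, ∫⁻ x, (G i x - g x) ∂μ
      = (∫⁻ x, G i x ∂μ + ∫⁻ x, (g x - G i x) ∂μ) - ∫⁻ x, g x ∂μ := fun i => by
    refine ENNReal.eq_sub_of_add_eq hfin ?_
    rw [← lintegral_add_right' _ hg, ← lintegral_add_left' (hG i)]
    simp only [tsub_add_eq_max, add_tsub_eq_max]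
  simp_rw [hsplit]
  simpa using ENNReal.Tendsto.sub (hint.add hdefect) tendsto_const_nhds (Or.inr hfin)

theorem tendsto_lintegral_zero_of_le_of_tendsto_lintegral (hF : ∀ i, AEMeasurable (F i) μ)
    (hG : ∀ i, AEMeasurable (G i) μ) (hg : AEMeasurable g μ) (hFG : ∀ i, ∀ᵐ x ∂μ, F i x ≤ G i x)
    (hF0 : ∀ᵐ x ∂μ, Tendsto (fun i => F i x) l (𝓝 0))
    (hGg : ∀ᵐ x ∂μ, Tendsto (fun i => G i x) l (𝓝 (g x)))
    (hint : Tendsto (fun i => ∫⁻ x, G i x ∂μ) l (𝓝 (∫⁻ x, g x ∂μ)))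
    (hfin : ∫⁻ x, g x ∂μ ≠ ∞) :
    Tendsto (fun i => ∫⁻ x, F i x ∂μ) l (𝓝 0) := by
  have hmin : Tendsto (fun i => ∫⁻ x, min (F i x) (g x) ∂μ) l (𝓝 0) := by
    have := tendsto_lintegral_filter_of_dominated_convergence' g
      (Eventually.of_forall fun i => (hF i).min hg)
      (Eventually.of_forall fun i => ae_of_all _ fun x => min_le_right _ _) hfin
      (by
        filter_upwards [hF0] with x hx
        simpa using hx.min (tendsto_const_nhds (x := g x)))
    simpa using this
  have hle : ∀ i, ∫⁻ x, F i x ∂μ ≤ ∫⁻ x, min (F i x) (g x) ∂μ + ∫⁻ x, (G i x - g x) ∂μ :=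
    fun i => by
    rw [← lintegral_add_left' ((hF i).min hg)]
    refine lintegral_mono_ae ?_
    filter_upwards [hFG i] with x hx
    rcases le_total (F i x) (g x) with h | h
    · simp [h]
    · rw [min_eq_right h, add_tsub_eq_max]
      exact hx.trans (le_max_right _ _)
  have := hmin.add (tendsto_lintegral_tsub_of_tendsto_lintegral hG hg hGg hint hfin)
  rw [zero_add] at this
  exact tendsto_of_tendsto_of_tendsto_of_le_of_le tendsto_const_nhds this (fun _ => zero_le) hle

end GeneralizedDominatedConvergence

theorem tendsto_norm_sub_rpow {E X : Type*} [NormedAddCommGroup E] {l : Filter X} {a : X → E}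
    (ha : Tendsto a l (𝓝 0)) {z : E} (hz : z ≠ 0) (e : ℝ) :
    Tendsto (fun x => ‖z - a x‖ ^ e) l (𝓝 (‖z‖ ^ e)) := by
  simpa using ((tendsto_const_nhds (x := z)).sub ha).norm.rpow_const (p := e)
    (Or.inl (by simpa using hz))

theorem tendsto_prod_norm_sub_rpow {E ι X : Type*} [NormedAddCommGroup E] [Fintype ι]
    {l : Filter X} {a : ι → X → E}
    (ha : ∀ j, Tendsto (a j) l (𝓝 0)) {z : E} (hz : z ≠ 0) (e : ι → ℝ) :
    Tendsto (fun x => ∏ j, ‖z - a j x‖ ^ e j) l (𝓝 (‖z‖ ^ ∑ j, e j)) := by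
  rw [Real.rpow_sum_of_pos (norm_pos_iff.2 hz)]
  exact tendsto_finsetProd _ fun j _ => tendsto_norm_sub_rpow (ha j) hz (e j)

section AddHaar

variable {E : Type*} [NormedAddCommGroup E] [NormedSpace ℝ E] [FiniteDimensional ℝ E]
  [MeasurableSpace E] [BorelSpace E] [Nontrivial E] {μ : Measure E} [μ.IsAddHaarMeasure]

theorem continuousAt_setLIntegral_ball {ψ : E → ℝ≥0∞} (hψ : Measurable ψ)
    {x₀ : E} {R r : ℝ} (hRr : R < r) (hfin : ∫⁻ w in ball x₀ r, ψ w ∂μ ≠ ∞) :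
    ContinuousAt (fun x => ∫⁻ w in ball x R, ψ w ∂μ) x₀ := by
  simp_rw [ContinuousAt, ← lintegral_indicator measurableSet_ball] at hfin ⊢
  refine tendsto_lintegral_filter_of_dominated_convergence _
    (Eventually.of_forall fun x => hψ.indicator measurableSet_ball) ?_ hfin ?_
  · filter_upwards [ball_mem_nhds x₀ (sub_pos.2 hRr)] with x hx
    refine ae_of_all _ (indicator_le_indicator_of_subset (ball_subset_ball' ?_)
      fun _ => zero_le)
    rw [mem_ball] at hx
    linarith
  · filter_upwards [measure_eq_zero_iff_ae_notMem.1 (Measure.addHaar_sphere μ x₀ R)]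
      with w hw
    refine tendsto_const_nhds.congr' ?_
    have hcont : Continuous fun x => dist w x := continuous_const.dist continuous_id
    rcases lt_or_gt_of_ne (mt mem_sphere.2 hw) with h | h
    · filter_upwards [(isOpen_lt hcont continuous_const).mem_nhds h] with x hx
      simp [indicator_of_mem (mem_ball.2 h), indicator_of_mem (mem_ball.2 hx)]
    · filter_upwards [(isOpen_lt continuous_const hcont).mem_nhds h] with x hx
      simp [indicator_of_notMem (mt mem_ball.1 h.not_gt),
        indicator_of_notMem (mt mem_ball.1 hx.not_gt)]

theorem tendsto_setLIntegral_ball_comp_sub {ψ : E → ℝ≥0∞} (hψ : Measurable ψ) {R r : ℝ}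
    (hRr : R < r) (hfin : ∫⁻ w in ball 0 r, ψ w ∂μ ≠ ∞) :
    Tendsto (fun a => ∫⁻ z in ball 0 R, ψ (z - a) ∂μ) (𝓝 0)
      (𝓝 (∫⁻ z in ball 0 R, ψ z ∂μ)) := by
  have htranslate (a : E) :
      ∫⁻ z in ball 0 R, ψ (z - a) ∂μ = ∫⁻ w in ball (-a) R, ψ w ∂μ := by
    rw [← (measurePreserving_sub_right μ a).setLIntegral_comp_preimage measurableSet_ball hψ]
    congr 2
    ext z
    simp [dist_eq_norm]
  simp_rw [htranslate]
  have := (continuousAt_setLIntegral_ball hψ hRr (neg_zero (G := E) ▸ hfin)).tendsto.comp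
    (continuous_neg.tendsto (0 : E))
  simpa [Function.comp_def] using this

theorem lintegral_ball_norm_rpow_neg_ne_top {c : ℝ} (hc : c < Module.finrank ℝ E) (r : ℝ) :
    ∫⁻ z in ball 0 r, ENNReal.ofReal (‖z‖ ^ (-c)) ∂μ ≠ ∞ :=
  (integrableOn_ball_of_norm_le_rpow (C := 1) Module.finrank_pos hc
    (ae_of_all _ fun z => by simp [abs_of_nonneg (Real.rpow_nonneg (norm_nonneg z) _)])
    (measurable_norm.pow_const _).aestronglyMeasurable).lintegral_lt_top.ne

variable {ι X : Type*} [Fintype ι] {l : Filter X} {a : ι → X → E}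

theorem tendsto_setLIntegral_sum_norm_sub_rpow (ha : ∀ j, Tendsto (a j) l (𝓝 0)) {c : ℝ}
    (hc : c < Module.finrank ℝ E) (R : ℝ) :
    Tendsto (fun x => ∫⁻ z in ball 0 R, ∑ j, ENNReal.ofReal (‖z - a j x‖ ^ (-c)) ∂μ) l
      (𝓝 (∫⁻ z in ball 0 R, ∑ _j : ι, ENNReal.ofReal (‖z‖ ^ (-c)) ∂μ)) := by
  have hψ : Measurable fun z : E => ENNReal.ofReal (‖z‖ ^ (-c)) := by fun_prop
  have hsum : ∀ f : ι → E → ℝ≥0∞, (∀ j, Measurable (f j)) →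
      ∫⁻ z in ball 0 R, ∑ j, f j z ∂μ = ∑ j, ∫⁻ z in ball 0 R, f j z ∂μ :=
    fun f hf => lintegral_finsetSum _ fun j _ => hf j
  rw [hsum _ fun _ => hψ]
  refine .congr (fun x => (hsum _ fun j => hψ.comp (measurable_id.sub_const (a j x))).symm) ?_
  exact tendsto_finsetSum _ fun j _ => (tendsto_setLIntegral_ball_comp_sub hψ (lt_add_one R)
    (lintegral_ball_norm_rpow_neg_ne_top hc _)).comp (ha j)

theorem tendsto_lintegral_abs_prod_norm_sub_rpow_sub_rpow [Nonempty ι] [l.IsCountablyGenerated]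
    (ha : ∀ j, Tendsto (a j) l (𝓝 0)) {β : ι → ℝ} (hβ : ∀ j, 0 ≤ β j) {q : ℝ} (hq : 0 < q)
    (hσq : 2 * (∑ j, β j) * q < Module.finrank ℝ E) (R : ℝ) :
    Tendsto (fun x => ∫⁻ z in ball 0 R, ENNReal.ofReal
        (|(∏ j, ‖z - a j x‖ ^ (-(2 * β j))) - ‖z‖ ^ (-(2 * ∑ j, β j))| ^ q) ∂μ) l (𝓝 0) := by
  set c := 2 * (∑ j, β j) * q
  have hψ : Measurable fun z : E => ENNReal.ofReal (‖z‖ ^ (-c)) := by fun_prop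
  have hfin := lintegral_ball_norm_rpow_neg_ne_top (μ := μ) hσq R
  have hae : ∀ᵐ z ∂μ.restrict (ball 0 R), z ≠ 0 :=
    ae_restrict_of_ae (measure_eq_zero_iff_ae_notMem.1 (measure_singleton (μ := μ) 0))
  refine tendsto_lintegral_zero_of_le_of_tendsto_lintegral
    (G := fun x z => ∑ j, ENNReal.ofReal (‖z - a j x‖ ^ (-c)) + ENNReal.ofReal (‖z‖ ^ (-c)))
    (g := fun z => ∑ _j : ι, ENNReal.ofReal (‖z‖ ^ (-c)) + ENNReal.ofReal (‖z‖ ^ (-c)))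
    (fun x => by fun_prop) (fun x => by fun_prop) (by fun_prop)
    (fun x => ae_of_all _ fun z => ?_) ?_ ?_ ?_ ?_
  · rw [← ENNReal.ofReal_sum_of_nonneg fun j _ => by positivity, ← ENNReal.ofReal_add
      (by positivity) (by positivity)]
    exact ENNReal.ofReal_le_ofReal (abs_prod_norm_sub_rpow_sub_rpow_le hβ hq.le _ z)
  · filter_upwards [hae] with z hz
    have hprod := tendsto_prod_norm_sub_rpow ha hz fun j => -(2 * β j)
    rw [Finset.sum_neg_distrib, ← Finset.mul_sum] at hprod
    have := (hprod.sub_const (‖z‖ ^ (-(2 * ∑ j, β j)))).abs.rpow_const (p := q) (Or.inr hq.le)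
    simpa [Function.comp_def, Real.zero_rpow hq.ne'] using
      (ENNReal.continuous_ofReal.tendsto _).comp this
  · filter_upwards [hae] with z hz
    exact (tendsto_finsetSum _ fun j _ => (ENNReal.continuous_ofReal.tendsto _).comp
      (tendsto_norm_sub_rpow (ha j) hz _)).add tendsto_const_nhds
  · simp_rw [lintegral_add_right' _ hψ.aemeasurable]
    exact (tendsto_setLIntegral_sum_norm_sub_rpow ha hσq R).add tendsto_const_nhds
  · rw [lintegral_add_right' _ hψ.aemeasurable, lintegral_finsetSum _ fun _ _ => hψ]
    exact ENNReal.add_ne_top.2 ⟨ENNReal.sum_ne_top.2 fun _ _ => hfin, hfin⟩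

end AddHaar

theorem prod_rpow_tendsto_Lq_ball_general
    (m : ℕ) (hm : 1 ≤ m) (β : Fin m → ℝ) (hβ : ∀ j, β j ∈ Set.Ioo (0 : ℝ) 1)
    (p : Fin m → ℂ) (R : ℝ)
    (q : ℝ) (hq : 1 ≤ q) (hqσ : q * (∑ j, β j) < 1) :
    Tendsto
      (fun t : ℝ => ∫ z in Metric.ball (0 : ℂ) R,
        |(∏ j, ‖z - (t : ℂ) * p j‖ ^ (-(2 * β j)))
          - ‖z‖ ^ (-(2 * ∑ j, β j))| ^ q)
      (nhdsWithin 0 (Set.Ioi 0)) (nhds 0) := by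
  have : Nonempty (Fin m) := ⟨⟨0, hm⟩⟩
  have hpoints : ∀ j, Tendsto (fun t : ℝ => (t : ℂ) * p j) (𝓝[>] 0) (𝓝 0) := fun j => by
    have : Continuous fun t : ℝ => (t : ℂ) * p j := by fun_prop
    simpa using (this.tendsto 0).mono_left nhdsWithin_le_nhds
  have hdim : 2 * (∑ j, β j) * q < Module.finrank ℝ ℂ := by
    rw [Complex.finrank_real_complex]
    push_cast
    linarith
  have hlintegral := tendsto_lintegral_abs_prod_norm_sub_rpow_sub_rpow (μ := volume) hpoints
    (fun j => (hβ j).1.le) (by linarith) hdim R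
  refine ((ENNReal.tendsto_toReal ENNReal.zero_ne_top).comp hlintegral).congr fun t => ?_
  exact (integral_eq_lintegral_of_nonneg_ae (ae_of_all _ fun z => by positivity)
    (Measurable.aestronglyMeasurable (by fun_prop))).symm

/-- For `β_1, …, β_m ∈ (0,1)` with `σ = β_1 + ⋯ + β_m`, points `p_1, …, p_m ∈ ℂ`,
`R > 0` and `q ≥ 1` with `qσ < 1`, the functions
`f_t(z) = ∏_j |z − t p_j|^{−2β_j}` converge to `f_0(z) = |z|^{−2σ}` in `L^q` of the
ball `B_R ⊆ ℂ` (with Lebesgue measure) as `t → 0⁺`. -/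
theorem prod_rpow_tendsto_Lq_ball
    (m : ℕ) (hm : 1 ≤ m) (β : Fin m → ℝ) (hβ : ∀ j, β j ∈ Set.Ioo (0 : ℝ) 1)
    (p : Fin m → ℂ) (R : ℝ) (hR : 0 < R)
    (q : ℝ) (hq : 1 ≤ q) (hqσ : q * (∑ j, β j) < 1) :
    Tendsto
      (fun t : ℝ => ∫ z in Metric.ball (0 : ℂ) R,
        |(∏ j, ‖z - (t : ℂ) * p j‖ ^ (-(2 * β j)))
          - ‖z‖ ^ (-(2 * ∑ j, β j))| ^ q)
      (nhdsWithin 0 (Set.Ioi 0)) (nhds 0) :=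
  prod_rpow_tendsto_Lq_ball_general m hm β hβ p R q hq hqσ
end

section
/- Let β′ ∈ (0, 1), a₀ ∈ ℝ, C₀ > 0, and let u : ℂ → ℝ be twice continuously differentiable (over ℝ) on the punctured unit ball {z : 0 < |z| < 1}, satisfying there |u(z) − a₀| ≤ C₀ |z|^{2−2β′}, ‖Du(z)‖ ≤ C₀ |z|^{1−2β′}, and ‖D²u(z)‖ ≤ C₀ |z|^{−2β′}, where Du and D²u denote the first and second Fréchet derivatives of u over ℝ. Let ψ : ℂ → ℝ be a smooth function with 0 ≤ ψ ≤ 1, ψ(w) = 0 for |w| ≤ 1, and ψ(w) = 1 for |w| ≥ 2. For t ∈ (0, 1/2] define u_t : ℂ → ℝ by u_t(z) = a₀ + ψ(z/t)(u(z) − a₀) (so u_t ≡ a₀ on {|z| ≤ t}). Then there exists a constant C > 0, depending only on C₀, β′ and ψ, such that for all t ∈ (0, 1/2] and all z with 0 < |z| < 1 one has ‖Du_t(z)‖ ≤ C |z|^{1−2β′} and ‖D²u_t(z)‖ ≤ C |z|^{−2β′}. -/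
open Complex

private lemma iter_congr {E F : Type*} [NormedAddCommGroup E] [NormedSpace ℝ E]
    [NormedAddCommGroup F] [NormedSpace ℝ F] {f g : E → F} {x : E}
    (h : f =ᶠ[nhds x] g) (n : ℕ) :
    iteratedFDeriv ℝ n f x = iteratedFDeriv ℝ n g x := by
  simp only [← iteratedFDerivWithin_univ]
  exact Filter.EventuallyEq.iteratedFDerivWithin_eq
    (by rwa [nhdsWithin_univ]) h.eq_of_nhds n

private lemma psi_bound (ψ : ℂ → ℝ) (hψ : ContDiff ℝ (⊤ : ℕ∞) ψ)
    (hψ1 : ∀ w : ℂ, 2 ≤ ‖w‖ → ψ w = 1) (n : ℕ) (hn : n ≠ 0) :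
    ∃ M : ℝ, ∀ w : ℂ, ‖iteratedFDeriv ℝ n ψ w‖ ≤ M := by
  have hc : Continuous fun w => ‖iteratedFDeriv ℝ n ψ w‖ :=
    (hψ.continuous_iteratedFDeriv (by exact_mod_cast le_top)).norm
  obtain ⟨x₀, -, hM⟩ := (isCompact_closedBall (0:ℂ) 2).exists_isMaxOn
    ⟨0, by simp⟩ hc.continuousOn
  refine ⟨‖iteratedFDeriv ℝ n ψ x₀‖, fun w => ?_⟩
  by_cases hw : ‖w‖ ≤ 2
  · exact hM (by simpa [Metric.mem_closedBall] using hw)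
  · push_neg at hw
    have hopen : IsOpen {v : ℂ | 2 < ‖v‖} := isOpen_lt continuous_const continuous_norm
    have heq : ψ =ᶠ[nhds w] fun _ => (1:ℝ) := by
      filter_upwards [hopen.mem_nhds hw] with v hv
      exact hψ1 v hv.le
    rw [iter_congr heq n, iteratedFDeriv_const_of_ne hn]
    simp only [Pi.zero_apply, norm_zero]
    exact norm_nonneg _


private lemma phi_iter_bound {ψ : ℂ → ℝ} (hψ : ContDiff ℝ (⊤ : ℕ∞) ψ) {t : ℝ} (ht : 0 < t)
    {n : ℕ} {M : ℝ} (hM : ∀ w : ℂ, ‖iteratedFDeriv ℝ n ψ w‖ ≤ M) (w : ℂ) :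
    ‖iteratedFDeriv ℝ n (fun w : ℂ => ψ (w / (t : ℂ))) w‖ ≤ M * t⁻¹ ^ n := by
  set L : ℂ →L[ℝ] ℂ := ((t:ℂ)⁻¹ • ContinuousLinearMap.id ℂ ℂ).restrictScalars ℝ with hLdef
  have hLapp : ∀ v : ℂ, L v = v / (t:ℂ) := by
    intro v
    simp [hLdef, div_eq_mul_inv, mul_comm]
  have hfun : (fun w : ℂ => ψ (w / (t:ℂ))) = ψ ∘ L := by
    funext v; simp [Function.comp, hLapp v]
  have hLnorm : ‖L‖ ≤ t⁻¹ := by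
    apply ContinuousLinearMap.opNorm_le_bound _ (by positivity)
    intro v
    rw [hLapp v, norm_div, Complex.norm_real, Real.norm_eq_abs, abs_of_pos ht,
      div_eq_inv_mul]
  rw [hfun, L.iteratedFDeriv_comp_right hψ w ((by exact_mod_cast le_top))]
  calc ‖(iteratedFDeriv ℝ n ψ (L w)).compContinuousLinearMap fun _ => L‖
      ≤ ‖iteratedFDeriv ℝ n ψ (L w)‖ * ∏ _i : Fin n, ‖L‖ :=
        ContinuousMultilinearMap.norm_compContinuousLinearMap_le _ _
    _ ≤ M * t⁻¹ ^ n := by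
        rw [Finset.prod_const, Finset.card_univ, Fintype.card_fin]
        exact mul_le_mul (hM _) (pow_le_pow_left₀ (norm_nonneg _) hLnorm n)
          (by positivity) (le_trans (norm_nonneg _) (hM 0))


set_option maxHeartbeats 1000000 in
/-- Cutting off a function `u` with conical-type bounds preserves the derivative bounds.
If `u` is `C²` on the punctured unit ball with `|u − a₀| ≤ C₀|z|^{2−2β'}`,
`‖Du‖ ≤ C₀|z|^{1−2β'}`, `‖D²u‖ ≤ C₀|z|^{−2β'}`, and `ψ` is a smooth cutoff vanishing
on `{|w| ≤ 1}` and equal to `1` on `{|w| ≥ 2}`, then `u_t(z) = a₀ + ψ(z/t)(u(z) − a₀)`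
satisfies `‖Du_t‖ ≤ C|z|^{1−2β'}` and `‖D²u_t‖ ≤ C|z|^{−2β'}` on the punctured unit
ball, uniformly in `t ∈ (0, 1/2]`. -/
theorem cutoff_deriv_bounds
    (β' : ℝ) (hβ' : β' ∈ Set.Ioo (0 : ℝ) 1) (a₀ : ℝ) (C₀ : ℝ) (hC₀ : 0 < C₀)
    (u : ℂ → ℝ)
    (hu : ContDiffOn ℝ 2 u {z : ℂ | 0 < ‖z‖ ∧ ‖z‖ < 1})
    (hu0 : ∀ z : ℂ, 0 < ‖z‖ → ‖z‖ < 1 →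
      |u z - a₀| ≤ C₀ * ‖z‖ ^ (2 - 2 * β'))
    (hu1 : ∀ z : ℂ, 0 < ‖z‖ → ‖z‖ < 1 →
      ‖fderiv ℝ u z‖ ≤ C₀ * ‖z‖ ^ (1 - 2 * β'))
    (hu2 : ∀ z : ℂ, 0 < ‖z‖ → ‖z‖ < 1 →
      ‖iteratedFDeriv ℝ 2 u z‖ ≤ C₀ * ‖z‖ ^ (-(2 * β')))
    (ψ : ℂ → ℝ) (hψ : ContDiff ℝ (⊤ : ℕ∞) ψ)
    (hψ01 : ∀ w, ψ w ∈ Set.Icc (0 : ℝ) 1)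
    (hψ0 : ∀ w : ℂ, ‖w‖ ≤ 1 → ψ w = 0)
    (hψ1 : ∀ w : ℂ, 2 ≤ ‖w‖ → ψ w = 1) :
    ∃ C > 0, ∀ t : ℝ, t ∈ Set.Ioc (0 : ℝ) (1 / 2) →
      ∀ z : ℂ, 0 < ‖z‖ → ‖z‖ < 1 →
        ‖fderiv ℝ (fun w : ℂ => a₀ + ψ (w / (t : ℂ)) * (u w - a₀)) z‖ ≤
          C * ‖z‖ ^ (1 - 2 * β') ∧
        ‖iteratedFDeriv ℝ 2 (fun w : ℂ => a₀ + ψ (w / (t : ℂ)) * (u w - a₀)) z‖ ≤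
          C * ‖z‖ ^ (-(2 * β')) := by
  obtain ⟨hβ0, hβ1⟩ := hβ'
  obtain ⟨M₁, hM₁⟩ := psi_bound ψ hψ hψ1 1 one_ne_zero
  obtain ⟨M₂, hM₂⟩ := psi_bound ψ hψ hψ1 2 two_ne_zero
  set M : ℝ := max 1 (max M₁ M₂) with hMdef
  have hM1 : (1:ℝ) ≤ M := le_max_left _ _
  have hM0 : (0:ℝ) ≤ M := by linarith
  have hMb1 : ∀ w : ℂ, ‖iteratedFDeriv ℝ 1 ψ w‖ ≤ M :=
    fun w => (hM₁ w).trans ((le_max_left _ _).trans (le_max_right _ _))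
  have hMb2 : ∀ w : ℂ, ‖iteratedFDeriv ℝ 2 ψ w‖ ≤ M :=
    fun w => (hM₂ w).trans ((le_max_right _ _).trans (le_max_right _ _))
  have hCpos : 0 < C₀ * (1 + 8 * M) := by nlinarith
  refine ⟨C₀ * (1 + 8 * M), hCpos, ?_⟩
  rintro t ⟨ht0, ht2⟩ z hz0 hz1
  have hX1 : (0:ℝ) ≤ ‖z‖ ^ (1 - 2 * β') := Real.rpow_nonneg (by positivity) _
  have hX2 : (0:ℝ) ≤ ‖z‖ ^ (2 - 2 * β') := Real.rpow_nonneg (by positivity) _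
  have hP : (0:ℝ) ≤ ‖z‖ ^ (-(2 * β')) := Real.rpow_nonneg (by positivity) _
  by_cases hlt : ‖z‖ < t
  · -- near the origin the function is locally constant
    have hopen : IsOpen {w : ℂ | ‖w‖ < t} :=
      isOpen_lt continuous_norm continuous_const
    have heq : (fun w : ℂ => a₀ + ψ (w / (t : ℂ)) * (u w - a₀)) =ᶠ[nhds z]
        fun _ => a₀ := by
      filter_upwards [hopen.mem_nhds hlt] with w hw
      have hψw : ψ (w / (t:ℂ)) = 0 := by
        apply hψ0
        rw [norm_div, Complex.norm_real, Real.norm_eq_abs, abs_of_pos ht0]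
        exact (div_le_one ht0).2 hw.le
      simp [hψw]
    constructor
    · rw [heq.fderiv_eq, fderiv_const_apply]
      simpa using mul_nonneg hCpos.le hX1
    · rw [iter_congr heq 2, iteratedFDeriv_const_of_ne two_ne_zero]
      simpa using mul_nonneg hCpos.le hP
  by_cases hgt : 2 * t < ‖z‖
  · -- far from the cutoff the function agrees with u
    have hopen : IsOpen {w : ℂ | 2 * t < ‖w‖} :=
      isOpen_lt continuous_const continuous_norm
    have heq : (fun w : ℂ => a₀ + ψ (w / (t : ℂ)) * (u w - a₀)) =ᶠ[nhds z] u := by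
      filter_upwards [hopen.mem_nhds hgt] with w hw
      have hψw : ψ (w / (t:ℂ)) = 1 := by
        apply hψ1
        rw [norm_div, Complex.norm_real, Real.norm_eq_abs, abs_of_pos ht0]
        rw [le_div_iff₀ ht0]
        linarith [hw]
      simp [hψw]
    have hcoef : C₀ ≤ C₀ * (1 + 8 * M) := by nlinarith
    constructor
    · rw [heq.fderiv_eq]
      exact (hu1 z hz0 hz1).trans (mul_le_mul_of_nonneg_right hcoef hX1)
    · rw [iter_congr heq 2]
      exact (hu2 z hz0 hz1).trans (mul_le_mul_of_nonneg_right hcoef hP)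
  -- the annulus t ≤ |z| ≤ 2t
  push_neg at hlt hgt
  set A := ‖z‖ with hAdef
  have hA0 : (0:ℝ) < A := hz0
  have hainv : (0:ℝ) ≤ A⁻¹ := by positivity
  set s : Set ℂ := {w : ℂ | 0 < ‖w‖ ∧ ‖w‖ < 1} with hsdef
  have hs_open : IsOpen s := by
    have : s = (fun w : ℂ => ‖w‖) ⁻¹' (Set.Ioo 0 1) := rfl
    rw [this]
    exact isOpen_Ioo.preimage continuous_norm
  have hzs : z ∈ s := ⟨hz0, hz1⟩
  -- smoothness of the rescaled cutoff
  have hdivc : ContDiff ℝ (⊤ : ℕ∞) fun w : ℂ => w / (t:ℂ) := contDiff_id.div_const _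
  have hφcd : ContDiff ℝ (⊤ : ℕ∞) fun w : ℂ => ψ (w / (t:ℂ)) := hψ.comp hdivc
  -- derivative bounds for the rescaled cutoff
  have hφ1b : ∀ w : ℂ, ‖iteratedFDeriv ℝ 1 (fun w : ℂ => ψ (w / (t:ℂ))) w‖ ≤ M * t⁻¹ :=
    fun w => by simpa using phi_iter_bound hψ ht0 hMb1 w
  have hφ2b : ∀ w : ℂ, ‖iteratedFDeriv ℝ 2 (fun w : ℂ => ψ (w / (t:ℂ))) w‖ ≤ M * t⁻¹ ^ 2 :=
    fun w => phi_iter_bound hψ ht0 hMb2 w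
  have hfdφ : ∀ w : ℂ, ‖fderiv ℝ (fun w : ℂ => ψ (w / (t:ℂ))) w‖ ≤ M * t⁻¹ := by
    intro w
    calc ‖fderiv ℝ (fun w : ℂ => ψ (w / (t:ℂ))) w‖
        = ‖iteratedFDeriv ℝ 0 (fderiv ℝ fun w : ℂ => ψ (w / (t:ℂ))) w‖ :=
          norm_iteratedFDeriv_zero.symm
      _ = ‖iteratedFDeriv ℝ 1 (fun w : ℂ => ψ (w / (t:ℂ))) w‖ := norm_iteratedFDeriv_fderiv
      _ ≤ M * t⁻¹ := hφ1b w
  have hinv : t⁻¹ ≤ 2 * A⁻¹ := by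
    have h1 : t⁻¹ ≤ (A / 2)⁻¹ := by
      gcongr
      all_goals linarith
    calc t⁻¹ ≤ (A / 2)⁻¹ := h1
      _ = 2 * A⁻¹ := by rw [inv_div, div_eq_mul_inv]
  -- rpow identities
  have id1 : A ^ (2 - 2*β') * A⁻¹ = A ^ (1 - 2*β') := by
    rw [← Real.rpow_neg_one A, ← Real.rpow_add hA0]
    congr 1
    ring
  have id2 : A ^ (1 - 2*β') * A⁻¹ = A ^ (-(2*β')) := by
    rw [← Real.rpow_neg_one A, ← Real.rpow_add hA0]
    ring_nf
  have hψz1 : |ψ (z / (t:ℂ))| ≤ 1 :=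
    abs_le.2 ⟨by linarith [(hψ01 (z / (t:ℂ))).1], (hψ01 (z / (t:ℂ))).2⟩
  -- differentiability facts
  have hdφ : DifferentiableAt ℝ (fun w : ℂ => ψ (w / (t:ℂ))) z :=
    hφcd.differentiable (by simp) z
  have hcAt : ContDiffAt ℝ 2 u z := hu.contDiffAt (hs_open.mem_nhds hzs)
  have hdu : DifferentiableAt ℝ u z := hcAt.differentiableAt two_ne_zero
  have hdv : DifferentiableAt ℝ (fun w => u w - a₀) z := hdu.sub_const _
  constructor
  · -- first derivative bound
    rw [fderiv_const_add, fderiv_fun_mul hdφ hdv]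
    have hT1 : ‖ψ (z / (t:ℂ)) • fderiv ℝ (fun w => u w - a₀) z‖ ≤ C₀ * A ^ (1 - 2*β') := by
      rw [norm_smul, Real.norm_eq_abs, fderiv_sub_const]
      calc |ψ (z / (t:ℂ))| * ‖fderiv ℝ u z‖ ≤ 1 * (C₀ * A ^ (1 - 2*β')) :=
            mul_le_mul hψz1 (hu1 z hz0 hz1) (norm_nonneg _) one_pos.le
        _ = C₀ * A ^ (1 - 2*β') := one_mul _
    have hT2 : ‖(u z - a₀) • fderiv ℝ (fun w : ℂ => ψ (w / (t:ℂ))) z‖ ≤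
        2 * M * (C₀ * A ^ (1 - 2*β')) := by
      rw [norm_smul, Real.norm_eq_abs]
      calc |u z - a₀| * ‖fderiv ℝ (fun w : ℂ => ψ (w / (t:ℂ))) z‖
          ≤ (C₀ * A ^ (2 - 2*β')) * (M * (2 * A⁻¹)) := by
            apply mul_le_mul (hu0 z hz0 hz1) ((hfdφ z).trans ?_) (norm_nonneg _)
              (by positivity)
            exact mul_le_mul_of_nonneg_left hinv hM0
        _ = 2 * M * (C₀ * (A ^ (2 - 2*β') * A⁻¹)) := by ring
        _ = 2 * M * (C₀ * A ^ (1 - 2*β')) := by rw [id1]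
    calc ‖ψ (z / (t:ℂ)) • fderiv ℝ (fun w => u w - a₀) z +
          (u z - a₀) • fderiv ℝ (fun w : ℂ => ψ (w / (t:ℂ))) z‖
        ≤ C₀ * A ^ (1 - 2*β') + 2 * M * (C₀ * A ^ (1 - 2*β')) :=
          (norm_add_le _ _).trans (add_le_add hT1 hT2)
      _ ≤ C₀ * (1 + 8 * M) * A ^ (1 - 2*β') := by
          nlinarith [mul_nonneg (mul_nonneg hM0 hC₀.le) hX1]
  · -- second derivative bound
    have hvcd : ContDiffOn ℝ 2 (fun w => u w - a₀) s := hu.sub contDiffOn_const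
    have hφcd2 : ContDiffOn ℝ 2 (fun w : ℂ => ψ (w / (t:ℂ))) s :=
      (hφcd.of_le (WithTop.coe_le_coe.2 (le_top : (2:ℕ∞) ≤ ⊤))).contDiffOn
    have hprodcd : ContDiffOn ℝ 2 (fun w : ℂ => ψ (w / (t:ℂ)) * (u w - a₀)) s :=
      hφcd2.mul hvcd
    have step1 : iteratedFDeriv ℝ 2 (fun w : ℂ => a₀ + ψ (w / (t:ℂ)) * (u w - a₀)) z =
        iteratedFDerivWithin ℝ 2 (fun w : ℂ => a₀ + ψ (w / (t:ℂ)) * (u w - a₀)) s z :=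
      (iteratedFDerivWithin_of_isOpen 2 hs_open hzs).symm
    have step2 : iteratedFDerivWithin ℝ 2
        (fun w : ℂ => a₀ + ψ (w / (t:ℂ)) * (u w - a₀)) s z =
        iteratedFDerivWithin ℝ 2 (fun w : ℂ => ψ (w / (t:ℂ)) * (u w - a₀)) s z := by
      rw [iteratedFDerivWithin_add_apply' (contDiffOn_const.contDiffWithinAt hzs) (hprodcd z hzs) hs_open.uniqueDiffOn hzs,
        iteratedFDerivWithin_const_of_ne two_ne_zero _ s, Pi.zero_apply, zero_add]
    have hsum := norm_iteratedFDerivWithin_mul_le hφcd2 hvcd hs_open.uniqueDiffOn hzs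
      (le_refl (2 : WithTop ℕ∞))
    have w0φb : ‖iteratedFDerivWithin ℝ 0 (fun w : ℂ => ψ (w / (t:ℂ))) s z‖ ≤ 1 := by
      rw [norm_iteratedFDerivWithin_zero]
      simpa [Real.norm_eq_abs] using hψz1
    have w1φb : ‖iteratedFDerivWithin ℝ 1 (fun w : ℂ => ψ (w / (t:ℂ))) s z‖ ≤
        M * (2 * A⁻¹) := by
      rw [iteratedFDerivWithin_of_isOpen 1 hs_open hzs]
      exact (hφ1b z).trans (mul_le_mul_of_nonneg_left hinv hM0)
    have w2φb : ‖iteratedFDerivWithin ℝ 2 (fun w : ℂ => ψ (w / (t:ℂ))) s z‖ ≤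
        M * (2 * A⁻¹) ^ 2 := by
      rw [iteratedFDerivWithin_of_isOpen 2 hs_open hzs]
      exact (hφ2b z).trans (mul_le_mul_of_nonneg_left
        (pow_le_pow_left₀ (by positivity) hinv 2) hM0)
    have hv2eq : iteratedFDerivWithin ℝ 2 (fun w => u w - a₀) s z =
        iteratedFDeriv ℝ 2 u z := by
      have hrw : (fun w : ℂ => u w - a₀) = fun w : ℂ => u w + (-a₀) := by
        funext w; ring
      rw [hrw, iteratedFDerivWithin_add_apply' (hu z hzs) (contDiffOn_const.contDiffWithinAt hzs) hs_open.uniqueDiffOn hzs,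
        iteratedFDerivWithin_const_of_ne two_ne_zero _ s, Pi.zero_apply, add_zero,
        iteratedFDerivWithin_of_isOpen 2 hs_open hzs]
    have w2vb : ‖iteratedFDerivWithin ℝ 2 (fun w => u w - a₀) s z‖ ≤
        C₀ * A ^ (-(2*β')) := by
      rw [hv2eq]; exact hu2 z hz0 hz1
    have w1vb : ‖iteratedFDerivWithin ℝ 1 (fun w => u w - a₀) s z‖ ≤
        C₀ * A ^ (1 - 2*β') := by
      rw [iteratedFDerivWithin_of_isOpen 1 hs_open hzs]
      calc ‖iteratedFDeriv ℝ 1 (fun w => u w - a₀) z‖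
          = ‖iteratedFDeriv ℝ 0 (fderiv ℝ fun w => u w - a₀) z‖ :=
            norm_iteratedFDeriv_fderiv.symm
        _ = ‖fderiv ℝ (fun w => u w - a₀) z‖ := norm_iteratedFDeriv_zero
        _ = ‖fderiv ℝ u z‖ := by rw [fderiv_sub_const]
        _ ≤ C₀ * A ^ (1 - 2*β') := hu1 z hz0 hz1
    have w0vb : ‖iteratedFDerivWithin ℝ 0 (fun w => u w - a₀) s z‖ ≤
        C₀ * A ^ (2 - 2*β') := by
      rw [norm_iteratedFDerivWithin_zero]
      simpa [Real.norm_eq_abs] using hu0 z hz0 hz1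
    have t0 : ‖iteratedFDerivWithin ℝ 0 (fun w : ℂ => ψ (w / (t:ℂ))) s z‖ *
        ‖iteratedFDerivWithin ℝ 2 (fun w => u w - a₀) s z‖ ≤ 1 * (C₀ * A ^ (-(2*β'))) :=
      mul_le_mul w0φb w2vb (norm_nonneg _) one_pos.le
    have t1 : ‖iteratedFDerivWithin ℝ 1 (fun w : ℂ => ψ (w / (t:ℂ))) s z‖ *
        ‖iteratedFDerivWithin ℝ 1 (fun w => u w - a₀) s z‖ ≤
        2 * M * (C₀ * A ^ (-(2*β'))) := by
      refine le_trans (mul_le_mul w1φb w1vb (norm_nonneg _) (by positivity)) (le_of_eq ?_)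
      calc M * (2 * A⁻¹) * (C₀ * A ^ (1 - 2*β'))
          = 2 * M * (C₀ * (A ^ (1 - 2*β') * A⁻¹)) := by ring
        _ = 2 * M * (C₀ * A ^ (-(2*β'))) := by rw [id2]
    have t2 : ‖iteratedFDerivWithin ℝ 2 (fun w : ℂ => ψ (w / (t:ℂ))) s z‖ *
        ‖iteratedFDerivWithin ℝ 0 (fun w => u w - a₀) s z‖ ≤
        4 * M * (C₀ * A ^ (-(2*β'))) := by
      refine le_trans (mul_le_mul w2φb w0vb (norm_nonneg _) (by positivity)) (le_of_eq ?_)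
      calc M * (2 * A⁻¹) ^ 2 * (C₀ * A ^ (2 - 2*β'))
          = 4 * M * (C₀ * (A ^ (2 - 2*β') * A⁻¹ * A⁻¹)) := by ring
        _ = 4 * M * (C₀ * A ^ (-(2*β'))) := by rw [id1, id2]
    rw [step1, step2]
    refine hsum.trans ?_
    rw [Finset.sum_range_succ, Finset.sum_range_succ, Finset.sum_range_succ,
      Finset.sum_range_zero, zero_add]
    simp only [Nat.sub_zero, Nat.sub_self, show (2:ℕ) - 1 = 1 from rfl,
      Nat.choose_self, Nat.choose_zero_right, Nat.choose_one_right,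
      Nat.cast_one, Nat.cast_ofNat, one_mul]
    linarith [t0, t1, t2]
end

section
/- Let μ be a measure on a measurable space X, let 2 < q < q′ < ∞, and let A, B > 0. Let f be a measurable function on X with f ∈ L²(μ) ∩ L^{q′}(μ) and ‖f‖_{L²(μ)} = 1, and let D ≥ 0 be a real number satisfying D ≤ A ‖f‖²_{L^q(μ)} and ‖f‖²_{L^{q′}(μ)} ≤ B (1 + D). Then there exists a constant C > 0 depending only on A, B, q, q′ (and not on f, D, or μ) such that ‖f‖_{L^q(μ)} ≤ C and D ≤ C. -/
/-!
Write `N = ‖f‖_{L^q}` and `M = ‖f‖_{L^{q'}}`, and choose `θ ∈ (0, 1)` with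
`1/q = θ/2 + (1-θ)/q'`. Hölder's inequality applied to `|f| = |f|^θ |f|^(1-θ)` gives
`N ≤ ‖f‖₂^θ M^(1-θ) = M^(1-θ)`, hence `N² ≤ (M²)^(1-θ) ≤ (B (1 + A N²))^(1-θ)`.
For `N ≥ 1` the right-hand side is at most `(B (1 + A))^(1-θ) (N²)^(1-θ)`, and since `1 - θ < 1`
this forces `N² ≤ (B (1 + A))^((1-θ)/θ)`. Then `D ≤ A N²` is bounded as well.
-/

open MeasureTheory ENNReal

theorem MeasureTheory.eLpNorm_le_eLpNorm_rpow_mul_eLpNorm_rpow {α E : Type*} [MeasurableSpace α]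
    {μ : Measure α} [NormedAddCommGroup E] {f : α → E} (hf : AEStronglyMeasurable f μ)
    {p₀ p₁ p : ℝ≥0∞} {θ : ℝ} (hθ₀ : 0 < θ) (hθ₁ : θ < 1)
    (hp : p⁻¹ = ENNReal.ofReal θ / p₀ + ENNReal.ofReal (1 - θ) / p₁) :
    eLpNorm f p μ ≤ eLpNorm f p₀ μ ^ θ * eLpNorm f p₁ μ ^ (1 - θ) := by
  have hθ₁' : 0 < 1 - θ := sub_pos.2 hθ₁
  have : HolderTriple (p₀ / ENNReal.ofReal θ) (p₁ / ENNReal.ofReal (1 - θ)) p := ⟨by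
    rw [ENNReal.inv_div (.inl ofReal_ne_top) (.inl (ofReal_pos.2 hθ₀).ne'),
      ENNReal.inv_div (.inl ofReal_ne_top) (.inl (ofReal_pos.2 hθ₁').ne'), hp]⟩
  have hsplit : (fun x => ‖f x‖) = (fun x => ‖f x‖ ^ θ) • fun x => ‖f x‖ ^ (1 - θ) := by
    ext x
    rw [Pi.smul_apply', smul_eq_mul, ← Real.rpow_add' (norm_nonneg _) (by norm_num),
      add_sub_cancel, Real.rpow_one]
  calc eLpNorm f p μ = eLpNorm ((fun x => ‖f x‖ ^ θ) • fun x => ‖f x‖ ^ (1 - θ)) p μ := by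
        rw [← hsplit, eLpNorm_norm]
    _ ≤ eLpNorm (fun x => ‖f x‖ ^ θ) (p₀ / ENNReal.ofReal θ) μ *
          eLpNorm (fun x => ‖f x‖ ^ (1 - θ)) (p₁ / ENNReal.ofReal (1 - θ)) μ :=
        eLpNorm_smul_le_mul_eLpNorm (hf.norm.aemeasurable.pow_const _).aestronglyMeasurable
          (hf.norm.aemeasurable.pow_const _).aestronglyMeasurable
    _ = eLpNorm f p₀ μ ^ θ * eLpNorm f p₁ μ ^ (1 - θ) := by
        rw [eLpNorm_norm_rpow f hθ₀, eLpNorm_norm_rpow f hθ₁',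
          ENNReal.div_mul_cancel (ofReal_pos.2 hθ₀).ne' ofReal_ne_top,
          ENNReal.div_mul_cancel (ofReal_pos.2 hθ₁').ne' ofReal_ne_top]

theorem Real.exists_inv_eq_convex_combination {p₀ p p₁ : ℝ} (hp₀ : 0 < p₀) (hp₀p : p₀ < p)
    (hpp₁ : p < p₁) : ∃ θ ∈ Set.Ioo (0 : ℝ) 1, p⁻¹ = θ / p₀ + (1 - θ) / p₁ := by
  have hinv₁ : p₁⁻¹ < p⁻¹ := inv_strictAnti₀ (hp₀.trans hp₀p) hpp₁
  have hinv₀ : p⁻¹ < p₀⁻¹ := inv_strictAnti₀ hp₀ hp₀p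
  have hd : 0 < p₀⁻¹ - p₁⁻¹ := by linarith
  refine ⟨(p⁻¹ - p₁⁻¹) / (p₀⁻¹ - p₁⁻¹), ⟨div_pos (by linarith) hd,
    (div_lt_one hd).2 (by linarith)⟩, ?_⟩
  have hθ := div_mul_cancel₀ (p⁻¹ - p₁⁻¹) hd.ne'
  simp only [div_eq_mul_inv (b := p₀), div_eq_mul_inv (b := p₁)]
  linear_combination -hθ

theorem Real.le_rpow_inv_of_le_mul_rpow {x K s : ℝ} (hx : 0 < x) (hs : s < 1)
    (h : x ≤ K * x ^ s) : x ≤ K ^ (1 - s)⁻¹ := by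
  have hxs : x ^ (1 - s) ≤ K := by
    rwa [Real.rpow_sub hx, Real.rpow_one, div_le_iff₀ (Real.rpow_pos_of_pos hx s)]
  exact (Real.le_rpow_inv_iff_of_pos hx.le ((Real.rpow_pos_of_pos hx _).le.trans hxs)
    (sub_pos.2 hs)).2 hxs

theorem Real.le_max_one_of_le_rpow_mul_one_add {n a b s : ℝ} (ha : 0 ≤ a) (hb : 0 ≤ b)
    (hs₀ : 0 ≤ s) (hs₁ : s < 1) (h : n ≤ (b * (1 + a * n)) ^ s) :
    n ≤ max 1 (((b * (1 + a)) ^ s) ^ (1 - s)⁻¹) := by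
  rcases le_or_gt n 1 with hn₁ | hn₁
  · exact hn₁.trans (le_max_left _ _)
  refine le_max_of_le_right (Real.le_rpow_inv_of_le_mul_rpow (by linarith) hs₁ ?_)
  calc n ≤ (b * (1 + a * n)) ^ s := h
    _ ≤ (b * (1 + a) * n) ^ s := Real.rpow_le_rpow (by positivity) (by nlinarith) hs₀
    _ = (b * (1 + a)) ^ s * n ^ s := Real.mul_rpow (by positivity) (by linarith)

/-- Let `2 < q < q' < ∞` and `A, B > 0`. There is `C > 0`, depending only on
`A, B, q, q'`, such that for any measure `μ`, any measurable `f ∈ L²(μ) ∩ L^{q'}(μ)`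
with `‖f‖_{L²} = 1`, and any `D ≥ 0` with `D ≤ A ‖f‖²_{L^q}` and
`‖f‖²_{L^{q'}} ≤ B (1 + D)`, one has `‖f‖_{L^q} ≤ C` and `D ≤ C`. -/
theorem bounded_Lq_of_interpolation
    (q q' : ℝ) (hq : 2 < q) (hqq' : q < q') (A B : ℝ) (hA : 0 < A) (hB : 0 < B) :
    ∃ C > 0, ∀ (X : Type) (_ : MeasurableSpace X) (μ : Measure X) (f : X → ℝ)
      (D : ℝ), Measurable f →
      MemLp f 2 μ → MemLp f (ENNReal.ofReal q') μ →
      eLpNorm f 2 μ = 1 →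
      0 ≤ D →
      D ≤ A * (eLpNorm f (ENNReal.ofReal q) μ).toReal ^ 2 →
      (eLpNorm f (ENNReal.ofReal q') μ).toReal ^ 2 ≤ B * (1 + D) →
      (eLpNorm f (ENNReal.ofReal q) μ).toReal ≤ C ∧ D ≤ C := by
  obtain ⟨θ, ⟨hθ₀, hθ₁⟩, hq_inv⟩ := Real.exists_inv_eq_convex_combination two_pos hq hqq'
  have hq_inv' : (ENNReal.ofReal q)⁻¹ =
      ENNReal.ofReal θ / 2 + ENNReal.ofReal (1 - θ) / ENNReal.ofReal q' := by
    rw [← ofReal_inv_of_pos (by linarith), hq_inv, ofReal_add (by positivity)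
      (div_nonneg (by linarith) (by linarith)), ofReal_div_of_pos two_pos,
      ofReal_div_of_pos (by linarith), ofReal_ofNat]
  set s := 1 - θ
  set C₀ := max 1 (((B * (1 + A)) ^ s) ^ (1 - s)⁻¹)
  refine ⟨C₀ + A * C₀, by positivity, fun X _ μ f D hf _ hf' hf₂ _ hDq hq'D => ?_⟩
  set N := (eLpNorm f (ENNReal.ofReal q) μ).toReal
  set M := (eLpNorm f (ENNReal.ofReal q') μ).toReal
  have hNM : N ≤ M ^ s := by
    have h := eLpNorm_le_eLpNorm_rpow_mul_eLpNorm_rpow (μ := μ) hf.aestronglyMeasurable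
      hθ₀ hθ₁ hq_inv'
    rw [hf₂, one_rpow, one_mul] at h
    simpa [N, M, toReal_rpow] using
      toReal_mono (rpow_ne_top_of_nonneg (by linarith) hf'.eLpNorm_ne_top) h
  have hN₂ : N ^ 2 ≤ C₀ := by
    refine Real.le_max_one_of_le_rpow_mul_one_add hA.le hB.le (by linarith) (by linarith) ?_
    calc N ^ 2 ≤ (M ^ s) ^ 2 := by gcongr
      _ = (M ^ 2) ^ s := Real.rpow_pow_comm toReal_nonneg s 2
      _ ≤ (B * (1 + A * N ^ 2)) ^ s := by
        gcongr; linarith [mul_le_mul_of_nonneg_left hDq hB.le]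
  have hN : N ≤ C₀ := by
    rcases le_or_gt N 1 with hN₁ | hN₁
    · exact hN₁.trans (le_max_left _ _)
    · exact (le_self_pow₀ hN₁.le two_ne_zero).trans hN₂
  have hC₀ : 0 < C₀ := zero_lt_one.trans_le (le_max_left _ _)
  refine ⟨hN.trans (le_add_of_nonneg_right (by positivity)), ?_⟩
  calc D ≤ A * N ^ 2 := hDq
    _ ≤ A * C₀ := by gcongr
    _ ≤ C₀ + A * C₀ := le_add_of_nonneg_left hC₀.le
end
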